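/- Conservativity over intuitionistic propositional logic: let X ⊆ {D,T,4}. For every formula A containing no occurrence of □ or ◇, A is LIK X-derivable if and only if A is derivable in intuitionistic propositional logic. -/
import Mathlib


/-- Formulas of intuitionistic modal logic. -/
inductive Formula : Type where
  | atom : ℕ → Formula
  | top  : Formula
  | bot  : Formula
  | and  : Formula → Formula → Formula
  | or   : Formula → Formula → Formula
  | imp  : Formula → Formula → Formula
  | box  : Formula → Formula
  | dia  : Formula → Formula
deriving DecidableEq


/-- The three optional extension axioms D, T, 4. -/
inductive ModAx : Type where
  | D : ModAx
  | T : ModAx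
  | Four : ModAx
deriving DecidableEq

/-- The Hilbert system LIK X: a complete Hilbert base for intuitionistic
propositional logic (as axiom schemata, hence all substitution instances of
IPL theorems are derivable), the modal axioms K□, K◇, N, DP, RV, the
extension axioms D, T, 4 according to membership in `X`, with rules
modus ponens and necessitation. -/
inductive LIK (X : Set ModAx) : Formula → Prop where
  | a1 (A B : Formula) : LIK X (A.imp (B.imp A))
  | a2 (A B C : Formula) : LIK X ((A.imp (B.imp C)).imp ((A.imp B).imp (A.imp C)))
  | a3 (A B : Formula) : LIK X ((A.and B).imp A)
  | a4 (A B : Formula) : LIK X ((A.and B).imp B)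
  | a5 (A B : Formula) : LIK X (A.imp (B.imp (A.and B)))
  | a6 (A B : Formula) : LIK X (A.imp (A.or B))
  | a7 (A B : Formula) : LIK X (B.imp (A.or B))
  | a8 (A B C : Formula) : LIK X ((A.imp C).imp ((B.imp C).imp ((A.or B).imp C)))
  | exfalso (A : Formula) : LIK X (Formula.bot.imp A)
  | truth : LIK X Formula.top
  | kbox (A B : Formula) :
      LIK X ((Formula.box (A.imp B)).imp ((Formula.box A).imp (Formula.box B)))
  | kdia (A B : Formula) :
      LIK X ((Formula.box (A.imp B)).imp ((Formula.dia A).imp (Formula.dia B)))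
  | nax : LIK X ((Formula.dia Formula.bot).imp Formula.bot)
  | dp (A B : Formula) :
      LIK X ((Formula.dia (A.or B)).imp ((Formula.dia A).or (Formula.dia B)))
  | rv (A B : Formula) :
      LIK X ((Formula.box (A.or B)).imp ((Formula.dia A).or (Formula.box B)))
  | dax : ModAx.D ∈ X → LIK X (Formula.dia Formula.top)
  | tax (A : Formula) : ModAx.T ∈ X →
      LIK X (((Formula.box A).imp A).and (A.imp (Formula.dia A)))
  | fourax (A : Formula) : ModAx.Four ∈ X →
      LIK X (((Formula.box A).imp (Formula.box (Formula.box A))).and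
        ((Formula.dia (Formula.dia A)).imp (Formula.dia A)))
  | mp (A B : Formula) : LIK X (A.imp B) → LIK X A → LIK X B
  | nec (A : Formula) : LIK X A → LIK X (Formula.box A)

/-- A formula contains no occurrence of □ or ◇. -/
def Formula.PropOnly : Formula → Prop
  | .atom _ => True
  | .top => True
  | .bot => True
  | .and A B => A.PropOnly ∧ B.PropOnly
  | .or A B => A.PropOnly ∧ B.PropOnly
  | .imp A B => A.PropOnly ∧ B.PropOnly
  | .box _ => False
  | .dia _ => False

/-- A standard Hilbert axiomatization of intuitionistic propositional logic
over the □,◇-free formulas, with modus ponens as its only rule. -/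
inductive IPL : Formula → Prop where
  | a1 (A B : Formula) : A.PropOnly → B.PropOnly → IPL (A.imp (B.imp A))
  | a2 (A B C : Formula) : A.PropOnly → B.PropOnly → C.PropOnly →
      IPL ((A.imp (B.imp C)).imp ((A.imp B).imp (A.imp C)))
  | a3 (A B : Formula) : A.PropOnly → B.PropOnly → IPL ((A.and B).imp A)
  | a4 (A B : Formula) : A.PropOnly → B.PropOnly → IPL ((A.and B).imp B)
  | a5 (A B : Formula) : A.PropOnly → B.PropOnly → IPL (A.imp (B.imp (A.and B)))
  | a6 (A B : Formula) : A.PropOnly → B.PropOnly → IPL (A.imp (A.or B))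
  | a7 (A B : Formula) : A.PropOnly → B.PropOnly → IPL (B.imp (A.or B))
  | a8 (A B C : Formula) : A.PropOnly → B.PropOnly → C.PropOnly →
      IPL ((A.imp C).imp ((B.imp C).imp ((A.or B).imp C)))
  | exfalso (A : Formula) : A.PropOnly → IPL (Formula.bot.imp A)
  | truth : IPL Formula.top
  | mp (A B : Formula) : IPL (A.imp B) → IPL A → IPL B

/-- Erase modalities. -/
def Formula.erase : Formula → Formula
  | .atom n => .atom n
  | .top => .top
  | .bot => .bot
  | .and A B => .and A.erase B.erase
  | .or A B => .or A.erase B.erase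
  | .imp A B => .imp A.erase B.erase
  | .box A => A.erase
  | .dia A => A.erase

lemma erase_propOnly (A : Formula) : A.erase.PropOnly := by
  induction A <;> simp [Formula.erase, Formula.PropOnly] <;> tauto

lemma erase_of_propOnly (A : Formula) (h : A.PropOnly) : A.erase = A := by
  induction A <;> simp_all [Formula.erase, Formula.PropOnly]

lemma ipl_id (A : Formula) (h : A.PropOnly) : IPL (A.imp A) :=
  IPL.mp _ _ (IPL.mp _ _ (IPL.a2 A (A.imp A) A h ⟨h, h⟩ h)
    (IPL.a1 A (A.imp A) h ⟨h, h⟩)) (IPL.a1 A A h h)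

lemma ipl_and_intro (A B : Formula) (hA : A.PropOnly) (hB : B.PropOnly)
    (dA : IPL A) (dB : IPL B) : IPL (A.and B) :=
  IPL.mp _ _ (IPL.mp _ _ (IPL.a5 A B hA hB) dA) dB

lemma lik_to_ipl {X : Set ModAx} {A : Formula} (h : LIK X A) : IPL A.erase := by
  induction h with
  | a1 A B => exact IPL.a1 _ _ (erase_propOnly A) (erase_propOnly B)
  | a2 A B C => exact IPL.a2 _ _ _ (erase_propOnly A) (erase_propOnly B) (erase_propOnly C)
  | a3 A B => exact IPL.a3 _ _ (erase_propOnly A) (erase_propOnly B)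
  | a4 A B => exact IPL.a4 _ _ (erase_propOnly A) (erase_propOnly B)
  | a5 A B => exact IPL.a5 _ _ (erase_propOnly A) (erase_propOnly B)
  | a6 A B => exact IPL.a6 _ _ (erase_propOnly A) (erase_propOnly B)
  | a7 A B => exact IPL.a7 _ _ (erase_propOnly A) (erase_propOnly B)
  | a8 A B C => exact IPL.a8 _ _ _ (erase_propOnly A) (erase_propOnly B) (erase_propOnly C)
  | exfalso A => exact IPL.exfalso _ (erase_propOnly A)
  | truth => exact IPL.truth
  | kbox A B =>
      exact ipl_id (A.erase.imp B.erase)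
        (show (A.erase.imp B.erase).PropOnly from ⟨erase_propOnly A, erase_propOnly B⟩)
  | kdia A B =>
      exact ipl_id (A.erase.imp B.erase)
        (show (A.erase.imp B.erase).PropOnly from ⟨erase_propOnly A, erase_propOnly B⟩)
  | nax => exact ipl_id Formula.bot (show Formula.bot.PropOnly from trivial)
  | dp A B =>
      exact ipl_id (A.erase.or B.erase)
        (show (A.erase.or B.erase).PropOnly from ⟨erase_propOnly A, erase_propOnly B⟩)
  | rv A B =>
      exact ipl_id (A.erase.or B.erase)
        (show (A.erase.or B.erase).PropOnly from ⟨erase_propOnly A, erase_propOnly B⟩)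
  | dax _ => exact IPL.truth
  | tax A _ =>
      exact ipl_and_intro _ _ (erase_propOnly (A.imp A)) (erase_propOnly (A.imp A))
        (ipl_id _ (erase_propOnly A)) (ipl_id _ (erase_propOnly A))
  | fourax A _ =>
      exact ipl_and_intro _ _ (erase_propOnly (A.imp A)) (erase_propOnly (A.imp A))
        (ipl_id _ (erase_propOnly A)) (ipl_id _ (erase_propOnly A))
  | mp A B _ _ ihAB ihA => exact IPL.mp _ _ ihAB ihA
  | nec A _ ih => exact ih

lemma ipl_to_lik {X : Set ModAx} {A : Formula} (h : IPL A) : LIK X A := by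
  induction h with
  | a1 A B _ _ => exact LIK.a1 A B
  | a2 A B C _ _ _ => exact LIK.a2 A B C
  | a3 A B _ _ => exact LIK.a3 A B
  | a4 A B _ _ => exact LIK.a4 A B
  | a5 A B _ _ => exact LIK.a5 A B
  | a6 A B _ _ => exact LIK.a6 A B
  | a7 A B _ _ => exact LIK.a7 A B
  | a8 A B C _ _ _ => exact LIK.a8 A B C
  | exfalso A _ => exact LIK.exfalso A
  | truth => exact LIK.truth
  | mp A B _ _ ihAB ihA => exact LIK.mp A B ihAB ihA

/-- Conservativity of LIK X over intuitionistic propositional logic: a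
□,◇-free formula is LIK X-derivable iff it is IPL-derivable. -/
theorem likx_conservative (X : Set ModAx) (A : Formula) (hA : A.PropOnly) :
    LIK X A ↔ IPL A := by
  constructor
  · intro h
    have := lik_to_ipl h
    rwa [erase_of_propOnly A hA] at this
  · exact ipl_to_lik
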